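/- arXiv:1203.0448 — 4 statements merged into one kernel-verified Lean document; each statement's English description precedes it below -/
import Mathlib

section
/- For all x ∈ ℝ and t > 0, the pointwise estimate |K₀(x,t)| ≤ (e^{−x²/(4εt)}/(2√(πεt))) · [ e^{−at} + b t E(t) ] holds. -/
open MeasureTheory Real Set

/-!
Integrating the sine series term by term against Wallis' integrals gives the Poisson-type
representation `J₁(z) = π⁻¹ ∫₀^π sin θ sin (z sin θ) dθ`, hence `|J₁(z)| ≤ |z| / 2`. So the
integrand of the Volterra term of `K₀` is at most `√(b t) e^{-x²/(4εt)} e^{-a y} e^{-β (t-y)}`,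
the Gaussian factor being increasing in `y ≤ t`; the convolution of the two exponentials over
`[0, t]` is exactly `E(t)`, and the triangle inequality concludes.
-/

noncomputable def J1 (z : ℝ) : ℝ :=
  ∑' k : ℕ, ((-1 : ℝ) ^ k / ((Nat.factorial k : ℝ) * (Nat.factorial (k + 1) : ℝ)))
    * (z / 2) ^ (2 * k + 1)

noncomputable def K0 (a b ε β x t : ℝ) : ℝ :=
  (1 / (2 * Real.sqrt (π * ε))) *
    (Real.exp (-(x ^ 2 / (4 * ε * t)) - a * t) / Real.sqrt t
      - Real.sqrt b * ∫ y in (0:ℝ)..t,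
          Real.exp (-(x ^ 2 / (4 * ε * y)) - a * y - β * (t - y)) / Real.sqrt (t - y)
            * J1 (2 * Real.sqrt (b * y * (t - y))))

theorem integral_sin_pow_two_mul_add_two (k : ℕ) :
    ∫ x in 0..π, sin x ^ (2 * k + 2) =
      π * (2 * k + 1).factorial / (2 ^ (2 * k + 1) * k.factorial * (k + 1).factorial) := by
  induction k with
  | zero => simp [integral_sin_sq]
  | succ k ih =>
    rw [show 2 * (k + 1) + 2 = 2 * k + 2 + 2 by ring, integral_sin_pow, ih,
      show 2 * (k + 1) + 1 = 2 * k + 1 + 1 + 1 by ring]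
    simp only [sin_zero, sin_pi, Nat.factorial_succ]
    push_cast
    field_simp
    ring

theorem hasSum_sin_mul_sin_mul_sin (z θ : ℝ) :
    HasSum (fun k : ℕ => (-1) ^ k * z ^ (2 * k + 1) / (2 * k + 1).factorial * sin θ ^ (2 * k + 2))
      (sin θ * sin (z * sin θ)) := by
  refine ((hasSum_sin (z * sin θ)).mul_left (sin θ)).congr_fun fun k => ?_
  ring

theorem hasSum_integral_sin_mul_sin_mul_sin (z : ℝ) :
    HasSum (fun k : ℕ => ∫ θ in 0..π,
        (-1) ^ k * z ^ (2 * k + 1) / (2 * k + 1).factorial * sin θ ^ (2 * k + 2))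
      (∫ θ in 0..π, sin θ * sin (z * sin θ)) := by
  refine intervalIntegral.hasSum_integral_of_dominated_convergence
    (fun k _ => |z| ^ (2 * k + 1) / (2 * k + 1).factorial) (fun k => by fun_prop)
    (fun k => ae_of_all _ fun θ _ => ?_)
    (ae_of_all _ fun _ _ =>
      (summable_pow_div_factorial |z|).comp_injective fun m n h => by simpa using h)
    intervalIntegrable_const (ae_of_all _ fun θ _ => hasSum_sin_mul_sin_mul_sin z θ)
  simp only [norm_mul, norm_div, norm_pow, norm_neg, norm_one, one_pow, one_mul,
    Real.norm_eq_abs, Nat.abs_cast]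
  exact mul_le_of_le_one_right (by positivity) (pow_le_one₀ (abs_nonneg _) (abs_sin_le_one θ))

theorem J1_eq_integral (z : ℝ) :
    J1 z = π⁻¹ * ∫ θ in 0..π, sin θ * sin (z * sin θ) := by
  rw [J1, eq_inv_mul_iff_mul_eq₀ pi_ne_zero, ← tsum_mul_left]
  refine ((hasSum_integral_sin_mul_sin_mul_sin z).congr_fun fun k => ?_).tsum_eq
  rw [intervalIntegral.integral_const_mul, integral_sin_pow_two_mul_add_two, div_pow]
  field_simp

theorem abs_J1_le (z : ℝ) : |J1 z| ≤ |z| / 2 := by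
  have hbound : ∀ θ ∈ Ioc 0 π, ‖sin θ * sin (z * sin θ)‖ ≤ |z| * sin θ ^ 2 := by
    intro θ hθ
    have hsin : 0 ≤ sin θ := sin_nonneg_of_nonneg_of_le_pi hθ.1.le hθ.2
    calc ‖sin θ * sin (z * sin θ)‖ = sin θ * |sin (z * sin θ)| := by
          rw [norm_mul, norm_of_nonneg hsin, Real.norm_eq_abs]
      _ ≤ sin θ * |z * sin θ| := mul_le_mul_of_nonneg_left abs_sin_le_abs hsin
      _ = |z| * sin θ ^ 2 := by rw [abs_mul, abs_of_nonneg hsin]; ring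
  have hint := intervalIntegral.norm_integral_le_of_norm_le pi_pos.le (ae_of_all volume hbound)
    ((by fun_prop : Continuous fun θ => |z| * sin θ ^ 2).intervalIntegrable 0 π)
  rw [intervalIntegral.integral_const_mul, integral_sin_sq] at hint
  simp only [sin_zero, sin_pi, zero_mul, sub_zero, zero_add] at hint
  rw [J1_eq_integral, abs_mul, abs_inv, abs_of_pos pi_pos, ← Real.norm_eq_abs,
    inv_mul_le_iff₀ pi_pos]
  linarith

theorem abs_J1_two_sqrt_mul_le {b y s : ℝ} (hb : 0 ≤ b) (hy : 0 ≤ y) :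
    |J1 (2 * √(b * y * s))| ≤ √(b * y) * √s := by
  refine (abs_J1_le _).trans_eq ?_
  rw [abs_of_nonneg (by positivity), Real.sqrt_mul (mul_nonneg hb hy)]
  ring

theorem integral_exp_neg_mul_mul_exp_neg_mul_sub {a β : ℝ} (hab : a ≠ β) (t : ℝ) :
    ∫ y in 0..t, exp (-a * y) * exp (-β * (t - y)) =
      (exp (-β * t) - exp (-a * t)) / (a - β) := by
  have hβa : β - a ≠ 0 := sub_ne_zero.2 hab.symm
  have hderiv : ∀ y, HasDerivAt (fun y => exp (-a * y - β * (t - y)) / (β - a))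
      (exp (-a * y) * exp (-β * (t - y))) y := by
    intro y
    refine ((((hasDerivAt_id y).const_mul (-a)).sub
      (((hasDerivAt_const y t).sub (hasDerivAt_id y)).const_mul β)).exp.div_const
        (β - a)).congr_deriv ?_
    simp only [Pi.sub_apply, id, ← exp_add]
    field_simp
    ring_nf
  rw [intervalIntegral.integral_eq_sub_of_hasDerivAt (fun y _ => hderiv y)
    ((by fun_prop : Continuous fun y => exp (-a * y) * exp (-β * (t - y))).intervalIntegrable 0 t)]
  rw [div_sub_div_same, ← neg_div_neg_eq]
  ring_nf

noncomputable def K0Integrand (a b ε β x t y : ℝ) : ℝ :=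
  exp (-(x ^ 2 / (4 * ε * y)) - a * y - β * (t - y)) / √(t - y) * J1 (2 * √(b * y * (t - y)))

theorem K0_eq (a b ε β x t : ℝ) :
    K0 a b ε β x t = 1 / (2 * √(π * ε)) *
      (exp (-(x ^ 2 / (4 * ε * t)) - a * t) / √t - √b * ∫ y in 0..t, K0Integrand a b ε β x t y) :=
  rfl

theorem norm_K0Integrand_le {a b ε β x t y : ℝ} (hb : 0 ≤ b) (hε : 0 < ε) (hy : y ∈ Ioc 0 t) :
    ‖K0Integrand a b ε β x t y‖ ≤
      √b * √t * exp (-(x ^ 2 / (4 * ε * t))) * (exp (-a * y) * exp (-β * (t - y))) := by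
  obtain ⟨hy0, hyt⟩ := hy
  have hgauss : exp (-(x ^ 2 / (4 * ε * y))) ≤ exp (-(x ^ 2 / (4 * ε * t))) := by
    gcongr
  have hJ : |J1 (2 * √(b * y * (t - y)))| / √(t - y) ≤ √b * √t := by
    rcases hyt.eq_or_lt with rfl | hlt
    · simp only [sub_self, Real.sqrt_zero, div_zero]
      positivity
    rw [div_le_iff₀ (Real.sqrt_pos.2 (sub_pos.2 hlt)), ← Real.sqrt_mul hb]
    refine (abs_J1_two_sqrt_mul_le hb hy0.le).trans ?_
    gcongr
  have hsplit : exp (-(x ^ 2 / (4 * ε * y)) - a * y - β * (t - y)) =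
      exp (-(x ^ 2 / (4 * ε * y))) * (exp (-a * y) * exp (-β * (t - y))) := by
    rw [← exp_add, ← exp_add]
    ring_nf
  calc ‖K0Integrand a b ε β x t y‖
      = exp (-(x ^ 2 / (4 * ε * y))) * (exp (-a * y) * exp (-β * (t - y))) *
          (|J1 (2 * √(b * y * (t - y)))| / √(t - y)) := by
        rw [K0Integrand, hsplit, norm_mul, norm_div, Real.norm_eq_abs, Real.norm_eq_abs,
          Real.norm_eq_abs, abs_of_pos (by positivity), abs_of_nonneg (Real.sqrt_nonneg _)]
        ring
    _ ≤ exp (-(x ^ 2 / (4 * ε * t))) * (exp (-a * y) * exp (-β * (t - y))) * (√b * √t) := by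
        gcongr
    _ = _ := by ring

theorem abs_integral_K0Integrand_le {a b ε β x t : ℝ} (hb : 0 ≤ b) (hε : 0 < ε) (hab : a ≠ β)
    (ht : 0 ≤ t) :
    |∫ y in 0..t, K0Integrand a b ε β x t y| ≤
      √b * √t * exp (-(x ^ 2 / (4 * ε * t))) * ((exp (-β * t) - exp (-a * t)) / (a - β)) := by
  rw [← integral_exp_neg_mul_mul_exp_neg_mul_sub hab, ← intervalIntegral.integral_const_mul]
  exact intervalIntegral.norm_integral_le_of_norm_le ht
    (ae_of_all _ fun y hy => norm_K0Integrand_le hb hε hy)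
    ((by fun_prop : Continuous fun y => √b * √t * exp (-(x ^ 2 / (4 * ε * t))) *
      (exp (-a * y) * exp (-β * (t - y)))).intervalIntegrable 0 t)

theorem K0_pointwise_estimate_general (a b ε β : ℝ) (hb : 0 < b) (hε : 0 < ε)
    (hab : a ≠ β) (x t : ℝ) (ht : 0 < t) :
    |K0 a b ε β x t| ≤
      Real.exp (-(x ^ 2) / (4 * ε * t)) / (2 * Real.sqrt (π * ε * t)) *
        (Real.exp (-a * t)
          + b * t * ((Real.exp (-β * t) - Real.exp (-a * t)) / (a - β))) := by
  set I := ∫ y in 0..t, K0Integrand a b ε β x t y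
  set G := exp (-(x ^ 2 / (4 * ε * t))) with hG
  set E := (exp (-β * t) - exp (-a * t)) / (a - β)
  have hI : |I| ≤ √b * √t * G * E := abs_integral_K0Integrand_le hb.le hε hab ht.le
  calc |K0 a b ε β x t|
      ≤ 1 / (2 * √(π * ε)) * (G * exp (-a * t) / √t + √b * |I|) := by
        rw [K0_eq, abs_mul, abs_of_pos (by positivity)]
        gcongr
        refine (abs_sub _ _).trans_eq ?_
        rw [abs_of_nonneg (by positivity), abs_mul, abs_of_nonneg (Real.sqrt_nonneg b),
          sub_eq_add_neg, exp_add, neg_mul]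
    _ ≤ 1 / (2 * √(π * ε)) * (G * exp (-a * t) / √t + √b * (√b * √t * G * E)) := by
        gcongr
    _ = _ := by
        rw [neg_div, ← hG, Real.sqrt_mul (mul_pos pi_pos hε).le]
        field_simp
        rw [sq_sqrt ht.le, sq_sqrt hb.le]
        ring

/-- pointwise estimate
`|K₀(x,t)| ≤ (e^{−x²/(4εt)}/(2√(πεt)))·[e^{−at} + b t E(t)]` with
`E(t) = (e^{−βt} − e^{−at})/(a−β)`. -/
theorem K0_pointwise_estimate (a b ε β : ℝ) (ha : 0 < a) (hb : 0 < b) (hε : 0 < ε)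
    (hβ : 0 < β) (hab : a ≠ β) (x t : ℝ) (ht : 0 < t) :
    |K0 a b ε β x t| ≤
      Real.exp (-(x ^ 2) / (4 * ε * t)) / (2 * Real.sqrt (π * ε * t)) *
        (Real.exp (-a * t)
          + b * t * ((Real.exp (-β * t) - Real.exp (-a * t)) / (a - β))) :=
  K0_pointwise_estimate_general a b ε β hb hε hab x t ht
end

section
/- For every L > 0, every x ∈ ℝ and every t > 0, the two-sided series Σ_{n=−∞}^{∞} K₀(x + 2nL, t) converges absolutely; in particular the theta-type function θ₀(x,t) = Σ_{n=−∞}^{∞} K₀(x + 2nL, t) is well defined. -/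
open MeasureTheory Real Set

lemma J1_zero : J1 0 = 0 := by
  simp [J1, pow_succ]

lemma abs_tsum_le_tsum_abs' {f : ℕ → ℝ} (h : Summable fun k => |f k|) :
    |∑' k, f k| ≤ ∑' k, |f k| := by
  simpa only [Real.norm_eq_abs] using
    norm_tsum_le_tsum_norm (f := f) (by simpa only [Real.norm_eq_abs] using h)

lemma J1_abs_le (z W : ℝ) (hz : 0 ≤ z) (hW : (z / 2) ^ 2 ≤ W) :
    |J1 z| ≤ (z / 2) * ∑' k : ℕ, W ^ k / (Nat.factorial k : ℝ) := by
  have hz2 : 0 ≤ z / 2 := by linarith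
  have hterm : ∀ k : ℕ,
      |((-1 : ℝ) ^ k / ((Nat.factorial k : ℝ) * (Nat.factorial (k + 1) : ℝ)))
        * (z / 2) ^ (2 * k + 1)| ≤ (z / 2) * (W ^ k / (Nat.factorial k : ℝ)) := by
    intro k
    have hfk : (1 : ℝ) ≤ (Nat.factorial k : ℝ) := by
      exact_mod_cast Nat.one_le_iff_ne_zero.mpr (Nat.factorial_ne_zero k)
    have hfk1 : (1 : ℝ) ≤ (Nat.factorial (k + 1) : ℝ) := by
      exact_mod_cast Nat.one_le_iff_ne_zero.mpr (Nat.factorial_ne_zero (k + 1))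
    have habs : |((-1 : ℝ) ^ k / ((Nat.factorial k : ℝ) * (Nat.factorial (k + 1) : ℝ)))
        * (z / 2) ^ (2 * k + 1)|
        = (z / 2) ^ (2 * k + 1) / ((Nat.factorial k : ℝ) * (Nat.factorial (k + 1) : ℝ)) := by
      rw [abs_mul, abs_div, abs_pow, abs_neg, abs_one, one_pow, abs_pow,
        abs_of_nonneg hz2, abs_of_nonneg (by positivity : (0:ℝ) ≤ (Nat.factorial k : ℝ) * (Nat.factorial (k+1) : ℝ))]
      ring
    rw [habs]
    have hpow : (z / 2) ^ (2 * k + 1) = (z / 2) * ((z / 2) ^ 2) ^ k := by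
      rw [← pow_mul]; ring
    rw [hpow]
    have h1 : ((z / 2) ^ 2) ^ k ≤ W ^ k := pow_le_pow_left₀ (sq_nonneg _) hW k
    calc (z / 2) * ((z / 2) ^ 2) ^ k / ((Nat.factorial k : ℝ) * (Nat.factorial (k + 1) : ℝ))
        ≤ (z / 2) * W ^ k / ((Nat.factorial k : ℝ) * 1) := by
          have hW0 : (0:ℝ) ≤ W := le_trans (sq_nonneg _) hW
          apply div_le_div₀ (mul_nonneg hz2 (pow_nonneg hW0 k)) (by gcongr) (by positivity)
          nlinarith [hfk, hfk1]
      _ = (z / 2) * (W ^ k / (Nat.factorial k : ℝ)) := by ring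
  have hsumW : Summable (fun k : ℕ => (z / 2) * (W ^ k / (Nat.factorial k : ℝ))) :=
    (Real.summable_pow_div_factorial W).mul_left _
  have hsumabs : Summable (fun k : ℕ =>
      |((-1 : ℝ) ^ k / ((Nat.factorial k : ℝ) * (Nat.factorial (k + 1) : ℝ)))
        * (z / 2) ^ (2 * k + 1)|) :=
    Summable.of_nonneg_of_le (fun k => abs_nonneg _) hterm hsumW
  calc |J1 z| ≤ ∑' k : ℕ, |((-1 : ℝ) ^ k / ((Nat.factorial k : ℝ) * (Nat.factorial (k + 1) : ℝ)))
        * (z / 2) ^ (2 * k + 1)| := abs_tsum_le_tsum_abs' hsumabs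
    _ ≤ ∑' k : ℕ, (z / 2) * (W ^ k / (Nat.factorial k : ℝ)) := Summable.tsum_le_tsum hterm hsumabs hsumW
    _ = (z / 2) * ∑' k : ℕ, W ^ k / (Nat.factorial k : ℝ) := tsum_mul_left

/-- `E(b,t) = Σ (b t²)^k / k!`. -/
noncomputable def Ebt (b t : ℝ) : ℝ := ∑' k : ℕ, (b * t ^ 2) ^ k / (Nat.factorial k : ℝ)

/-- `B(t) = ∫₀ᵗ (t-y)^{-1/2} dy`. -/
noncomputable def Bint (t : ℝ) : ℝ := ∫ y in (0:ℝ)..t, (t - y) ^ (-(1/2) : ℝ)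

lemma Ebt_nonneg (b t : ℝ) (hb : 0 ≤ b) : 0 ≤ Ebt b t :=
  tsum_nonneg fun k =>
    div_nonneg (pow_nonneg (mul_nonneg hb (sq_nonneg t)) k) (Nat.cast_nonneg _)

lemma Bint_intervalIntegrable (t : ℝ) :
    IntervalIntegrable (fun y : ℝ => (t - y) ^ (-(1/2) : ℝ)) volume 0 t := by
  have h := (intervalIntegral.intervalIntegrable_rpow' (r := -(1/2)) (by norm_num) (a := 0) (b := t)).comp_sub_left t
  simpa using h.symm

lemma Bint_nonneg (t : ℝ) (ht : 0 < t) : 0 ≤ Bint t := by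
  rw [Bint]
  apply intervalIntegral.integral_nonneg ht.le
  intro u hu
  exact Real.rpow_nonneg (by linarith [hu.2]) _

lemma integral_bound (a b ε β t : ℝ) (ha : 0 < a) (hb : 0 < b) (hε : 0 < ε) (hβ : 0 < β)
    (ht : 0 < t) (x' : ℝ) :
    |∫ y in (0:ℝ)..t, Real.exp (-(x' ^ 2 / (4 * ε * y)) - a * y - β * (t - y)) / Real.sqrt (t - y)
        * J1 (2 * Real.sqrt (b * y * (t - y)))|
      ≤ Real.exp (-(x' ^ 2 / (4 * ε * t))) * (Real.sqrt b * t * Ebt b t * Bint t) := by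
  have hE0 : 0 ≤ Ebt b t := Ebt_nonneg b t hb.le
  have hM0 : 0 ≤ Real.sqrt b * t * Ebt b t :=
    mul_nonneg (mul_nonneg (Real.sqrt_nonneg _) ht.le) hE0
  have hB0 : 0 ≤ Bint t := Bint_nonneg t ht
  set g : ℝ → ℝ := fun y =>
    Real.exp (-(x' ^ 2 / (4 * ε * y)) - a * y - β * (t - y)) / Real.sqrt (t - y)
      * J1 (2 * Real.sqrt (b * y * (t - y))) with hgdef
  set h : ℝ → ℝ := fun y =>
    (Real.exp (-(x' ^ 2 / (4 * ε * t))) * (Real.sqrt b * t * Ebt b t)) * (t - y) ^ (-(1/2) : ℝ)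
    with hhdef
  have hhint : IntervalIntegrable h volume 0 t :=
    (Bint_intervalIntegrable t).const_mul _
  have hle : ∀ y ∈ Icc (0:ℝ) t, |g y| ≤ h y := by
    intro y hy
    obtain ⟨hy0, hyt⟩ := hy
    rcases eq_or_lt_of_le hy0 with h0 | h0
    · -- y = 0
      have hg0 : g 0 = 0 := by
        simp [hgdef, J1_zero]
      rw [← h0, hg0, abs_zero, hhdef]
      exact mul_nonneg (mul_nonneg (Real.exp_pos _).le hM0) (Real.rpow_nonneg (by linarith) _)
    rcases eq_or_lt_of_le hyt with h1 | h1
    · -- y = t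
      have hgt : g t = 0 := by
        simp [hgdef]
      have hht : h t = 0 := by
        simp only [hhdef, sub_self]
        rw [Real.zero_rpow (by norm_num)]
        ring
      rw [h1, hgt, hht, abs_zero]
    · -- 0 < y < t
      have hty : 0 < t - y := by linarith
      have hsq : 0 < Real.sqrt (t - y) := Real.sqrt_pos.mpr hty
      have hbyt : 0 ≤ b * y * (t - y) := by positivity
      have hz : (0:ℝ) ≤ 2 * Real.sqrt (b * y * (t - y)) := by positivity
      have hhalf : 2 * Real.sqrt (b * y * (t - y)) / 2 = Real.sqrt (b * y * (t - y)) := by ring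
      have hyt2 : y * (t - y) ≤ t ^ 2 := by
        nlinarith [sq_nonneg (t - y), mul_nonneg hy0 ht.le]
      have hbyt2 : b * y * (t - y) ≤ b * t ^ 2 := by
        calc b * y * (t - y) = b * (y * (t - y)) := by ring
          _ ≤ b * t ^ 2 := mul_le_mul_of_nonneg_left hyt2 hb.le
      have hzsq : (2 * Real.sqrt (b * y * (t - y)) / 2) ^ 2 ≤ b * t ^ 2 := by
        rw [hhalf, Real.sq_sqrt hbyt]
        exact hbyt2
      have hJ : |J1 (2 * Real.sqrt (b * y * (t - y)))| ≤ Real.sqrt b * t * Ebt b t := by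
        refine (J1_abs_le _ _ hz hzsq).trans ?_
        rw [hhalf]
        have h3 : Real.sqrt (b * y * (t - y)) ≤ Real.sqrt b * t := by
          have h4 : Real.sqrt (b * y * (t - y)) ≤ Real.sqrt (b * t ^ 2) :=
            Real.sqrt_le_sqrt hbyt2
          rwa [Real.sqrt_mul hb.le, Real.sqrt_sq ht.le] at h4
        exact mul_le_mul_of_nonneg_right h3 hE0
      have hexp : Real.exp (-(x' ^ 2 / (4 * ε * y)) - a * y - β * (t - y))
          ≤ Real.exp (-(x' ^ 2 / (4 * ε * t))) := by
        apply Real.exp_le_exp.mpr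
        have hdd : x' ^ 2 / (4 * ε * t) ≤ x' ^ 2 / (4 * ε * y) :=
          div_le_div_of_nonneg_left (sq_nonneg _) (by positivity) (by nlinarith)
        nlinarith [mul_nonneg ha.le h0.le, mul_nonneg hβ.le hty.le]
      have hrpow : (t - y) ^ (-(1/2) : ℝ) = (Real.sqrt (t - y))⁻¹ := by
        rw [Real.rpow_neg hty.le, Real.sqrt_eq_rpow]
      have habs : |g y| = Real.exp (-(x' ^ 2 / (4 * ε * y)) - a * y - β * (t - y))
          / Real.sqrt (t - y) * |J1 (2 * Real.sqrt (b * y * (t - y)))| := by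
        rw [hgdef]
        rw [abs_mul, abs_of_nonneg (by positivity)]
      rw [habs]
      have step : Real.exp (-(x' ^ 2 / (4 * ε * y)) - a * y - β * (t - y)) / Real.sqrt (t - y)
            * |J1 (2 * Real.sqrt (b * y * (t - y)))|
          ≤ Real.exp (-(x' ^ 2 / (4 * ε * t))) / Real.sqrt (t - y)
            * (Real.sqrt b * t * Ebt b t) :=
        mul_le_mul (div_le_div_of_nonneg_right hexp (Real.sqrt_nonneg _)) hJ (abs_nonneg _)
          (by positivity)
      refine step.trans (le_of_eq ?_)
      simp only [hhdef]
      rw [hrpow, div_eq_mul_inv]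
      ring
  by_cases hint : IntervalIntegrable g volume 0 t
  · have h1 : |∫ y in (0:ℝ)..t, g y| ≤ ∫ y in (0:ℝ)..t, |g y| :=
      intervalIntegral.abs_integral_le_integral_abs ht.le
    have h2 : (∫ y in (0:ℝ)..t, |g y|) ≤ ∫ y in (0:ℝ)..t, h y :=
      intervalIntegral.integral_mono_on ht.le hint.abs hhint hle
    have h3 : (∫ y in (0:ℝ)..t, h y)
        = Real.exp (-(x' ^ 2 / (4 * ε * t))) * (Real.sqrt b * t * Ebt b t * Bint t) := by
      rw [hhdef, intervalIntegral.integral_const_mul, Bint]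
      ring
    calc |∫ y in (0:ℝ)..t, g y| ≤ ∫ y in (0:ℝ)..t, |g y| := h1
      _ ≤ ∫ y in (0:ℝ)..t, h y := h2
      _ = _ := h3
  · rw [intervalIntegral.integral_undef hint, abs_zero]
    exact mul_nonneg (Real.exp_pos _).le (mul_nonneg hM0 hB0)

lemma K0_abs_le (a b ε β t : ℝ) (ha : 0 < a) (hb : 0 < b) (hε : 0 < ε) (hβ : 0 < β)
    (ht : 0 < t) (x' : ℝ) :
    |K0 a b ε β x' t| ≤ (1 / (2 * Real.sqrt (π * ε))
        * (1 / Real.sqrt t + Real.sqrt b * (Real.sqrt b * t * Ebt b t * Bint t)))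
      * Real.exp (-(x' ^ 2 / (4 * ε * t))) := by
  have hI := integral_bound a b ε β t ha hb hε hβ ht x'
  have hA : (0:ℝ) ≤ 1 / (2 * Real.sqrt (π * ε)) := by positivity
  rw [K0, abs_mul, abs_of_nonneg hA]
  have hT1 : |Real.exp (-(x' ^ 2 / (4 * ε * t)) - a * t) / Real.sqrt t|
      ≤ Real.exp (-(x' ^ 2 / (4 * ε * t))) / Real.sqrt t := by
    rw [abs_div, abs_of_nonneg (Real.exp_pos _).le, abs_of_nonneg (Real.sqrt_nonneg _)]
    exact div_le_div_of_nonneg_right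
      (Real.exp_le_exp.mpr (by nlinarith [mul_pos ha ht])) (Real.sqrt_nonneg _)
  have htri : |Real.exp (-(x' ^ 2 / (4 * ε * t)) - a * t) / Real.sqrt t
      - Real.sqrt b * ∫ y in (0:ℝ)..t,
          Real.exp (-(x' ^ 2 / (4 * ε * y)) - a * y - β * (t - y)) / Real.sqrt (t - y)
            * J1 (2 * Real.sqrt (b * y * (t - y)))|
      ≤ Real.exp (-(x' ^ 2 / (4 * ε * t))) / Real.sqrt t
        + Real.sqrt b * (Real.exp (-(x' ^ 2 / (4 * ε * t))) * (Real.sqrt b * t * Ebt b t * Bint t)) := by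
    refine (abs_sub _ _).trans ?_
    have h2 : |Real.sqrt b * ∫ y in (0:ℝ)..t,
          Real.exp (-(x' ^ 2 / (4 * ε * y)) - a * y - β * (t - y)) / Real.sqrt (t - y)
            * J1 (2 * Real.sqrt (b * y * (t - y)))|
        ≤ Real.sqrt b * (Real.exp (-(x' ^ 2 / (4 * ε * t))) * (Real.sqrt b * t * Ebt b t * Bint t)) := by
      rw [abs_mul, abs_of_nonneg (Real.sqrt_nonneg _)]
      exact mul_le_mul_of_nonneg_left hI (Real.sqrt_nonneg _)
    exact add_le_add hT1 h2
  refine (mul_le_mul_of_nonneg_left htri hA).trans (le_of_eq ?_)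
  ring

/-- the two-sided series `Σ_{n∈ℤ} K₀(x+2nL, t)` converges absolutely,
so the theta-type function `θ₀` is well defined. -/
theorem theta0_summable (a b ε β : ℝ) (ha : 0 < a) (hb : 0 < b) (hε : 0 < ε)
    (hβ : 0 < β) (L : ℝ) (hL : 0 < L) (x t : ℝ) (ht : 0 < t) :
    Summable (fun n : ℤ => |K0 a b ε β (x + 2 * (n : ℝ) * L) t|) ∧
      Summable (fun n : ℤ => K0 a b ε β (x + 2 * (n : ℝ) * L) t) := by
  have hc : (0:ℝ) < 4 * ε * t := by positivity
  -- summability of the Gaussian comparison series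
  have hgauss : Summable (fun n : ℤ => Real.exp (-((x + 2 * (n : ℝ) * L) ^ 2 / (4 * ε * t)))) := by
    set c : ℝ := 4 * ε * t with hcdef
    have hr0 : (0:ℝ) ≤ Real.exp (-(2 * L ^ 2 / c)) := (Real.exp_pos _).le
    have hr1 : Real.exp (-(2 * L ^ 2 / c)) < 1 := by
      rw [Real.exp_lt_one_iff]
      have : (0:ℝ) < 2 * L ^ 2 / c := by positivity
      linarith
    have hsgeo : Summable (fun n : ℕ =>
        Real.exp (x ^ 2 / c) * Real.exp (-(2 * L ^ 2 / c)) ^ n) :=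
      (summable_geometric_of_lt_one hr0 hr1).mul_left _
    apply Summable.of_nat_of_neg
    · apply Summable.of_nonneg_of_le (fun n => (Real.exp_pos _).le) ?_ hsgeo
      intro n
      rw [← Real.exp_nat_mul, ← Real.exp_add]
      apply Real.exp_le_exp.mpr
      have hn : ((n:ℝ)) ≤ ((n:ℝ)) ^ 2 := by
        have := Nat.le_self_pow (two_ne_zero) n
        exact_mod_cast this
      have h2 : -((x + 2 * ((n:ℤ):ℝ) * L) ^ 2) ≤ x ^ 2 - (n:ℝ) * (2 * L ^ 2) := by
        push_cast
        nlinarith [sq_nonneg (2 * x + 2 * (n:ℝ) * L),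
          mul_le_mul_of_nonneg_left hn (by positivity : (0:ℝ) ≤ 2 * L ^ 2)]
      calc -((x + 2 * ((n:ℤ):ℝ) * L) ^ 2 / c)
          = (-((x + 2 * ((n:ℤ):ℝ) * L) ^ 2)) / c := by ring
        _ ≤ (x ^ 2 - (n:ℝ) * (2 * L ^ 2)) / c :=
            div_le_div_of_nonneg_right h2 hc.le
        _ = x ^ 2 / c + (n:ℕ) * -(2 * L ^ 2 / c) := by push_cast; ring
    · apply Summable.of_nonneg_of_le (fun n => (Real.exp_pos _).le) ?_ hsgeo
      intro n
      rw [← Real.exp_nat_mul, ← Real.exp_add]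
      apply Real.exp_le_exp.mpr
      have hn : ((n:ℝ)) ≤ ((n:ℝ)) ^ 2 := by
        have := Nat.le_self_pow (two_ne_zero) n
        exact_mod_cast this
      have h2 : -((x + 2 * ((-(n:ℤ) : ℤ):ℝ) * L) ^ 2) ≤ x ^ 2 - (n:ℝ) * (2 * L ^ 2) := by
        push_cast
        nlinarith [sq_nonneg (2 * x - 2 * (n:ℝ) * L),
          mul_le_mul_of_nonneg_left hn (by positivity : (0:ℝ) ≤ 2 * L ^ 2)]
      calc -((x + 2 * ((-(n:ℤ) : ℤ):ℝ) * L) ^ 2 / c)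
          = (-((x + 2 * ((-(n:ℤ) : ℤ):ℝ) * L) ^ 2)) / c := by ring
        _ ≤ (x ^ 2 - (n:ℝ) * (2 * L ^ 2)) / c :=
            div_le_div_of_nonneg_right h2 hc.le
        _ = x ^ 2 / c + (n:ℕ) * -(2 * L ^ 2 / c) := by push_cast; ring
  have hC : (0:ℝ) ≤ 1 / (2 * Real.sqrt (π * ε))
      * (1 / Real.sqrt t + Real.sqrt b * (Real.sqrt b * t * Ebt b t * Bint t)) := by
    apply mul_nonneg (by positivity)
    apply add_nonneg (by positivity)
    exact mul_nonneg (Real.sqrt_nonneg _)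
      (mul_nonneg (mul_nonneg (mul_nonneg (Real.sqrt_nonneg _) ht.le) (Ebt_nonneg b t hb.le))
        (Bint_nonneg t ht))
  have h1 : Summable (fun n : ℤ => |K0 a b ε β (x + 2 * (n : ℝ) * L) t|) :=
    Summable.of_nonneg_of_le (fun n => abs_nonneg _)
      (fun n => K0_abs_le a b ε β t ha hb hε hβ ht (x + 2 * (n : ℝ) * L))
      (hgauss.mul_left (1 / (2 * Real.sqrt (π * ε))
        * (1 / Real.sqrt t + Real.sqrt b * (Real.sqrt b * t * Ebt b t * Bint t))))
  exact ⟨h1, h1.of_abs⟩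
end

section
/- If u₁ and u₂ are both regular solutions (continuous on the closed rectangle [0,L] × [0,T], with u_t, u_x, u_xx continuous for 0 < t ≤ T) of the Neumann problem u_t − ε u_xx + a u + b ∫₀^t e^{−β(t−τ)} u(x,τ) dτ = f(x,t) on (0,L)×(0,T], u(x,0) = u₀(x), u_x(0,t) = ψ₁(t), u_x(L,t) = ψ₂(t), with the same continuous data f, u₀, ψ₁, ψ₂, then u₁ = u₂ on [0,L] × [0,T]. -/
/-!
The difference `w = u₁ - u₂` solves the homogeneous problem. Multiplying the equation by `2 w`
and integrating by parts in `x` (the Neumann conditions kill the boundary terms), the energy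
`E t = ∫₀ᴸ w(x,t)² dx` satisfies `E' ≤ -2ε ∫₀ᴸ w_x² - 2a E + b (t E + ∫₀ᵗ E)`, because the memory
kernel is bounded by `1` and `2 |w(x,t)| |w(x,τ)| ≤ w(x,t)² + w(x,τ)²`. Since `E 0 = 0`, a
Grönwall argument applied to `E + ∫₀ᵗ E` gives `E ≡ 0`, hence `w ≡ 0` by continuity.
-/

open MeasureTheory Real Set

/-- A regular solution of the Neumann problem for the integro-differential operator
`L u = u_t − ε u_xx + a u + b ∫₀^t e^{−β(t−τ)} u(·,τ) dτ` on `Ω_T`: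
continuous on `[0,L] × [0,T]`, with `u_t`, `u_x`, `u_xx` existing and continuous for
`0 < t ≤ T`, satisfying the equation on `(0,L) × (0,T]`, the initial condition, and
the Neumann boundary conditions. -/
def IsRegularNeumannSolution (a b ε β L T : ℝ) (f : ℝ → ℝ → ℝ)
    (u₀ ψ₁ ψ₂ : ℝ → ℝ) (u : ℝ → ℝ → ℝ) : Prop :=
  ContinuousOn (fun p : ℝ × ℝ => u p.1 p.2) (Set.Icc 0 L ×ˢ Set.Icc 0 T) ∧
  (∀ x ∈ Set.Icc (0:ℝ) L, ∀ t ∈ Set.Ioc (0:ℝ) T,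
    DifferentiableAt ℝ (fun τ => u x τ) t ∧
    DifferentiableAt ℝ (fun y => u y t) x ∧
    DifferentiableAt ℝ (fun y => deriv (fun z => u z t) y) x) ∧
  ContinuousOn (fun p : ℝ × ℝ => deriv (fun τ => u p.1 τ) p.2)
    (Set.Icc 0 L ×ˢ Set.Ioc 0 T) ∧
  ContinuousOn (fun p : ℝ × ℝ => deriv (fun y => u y p.2) p.1)
    (Set.Icc 0 L ×ˢ Set.Ioc 0 T) ∧
  ContinuousOn (fun p : ℝ × ℝ => iteratedDeriv 2 (fun y => u y p.2) p.1)
    (Set.Icc 0 L ×ˢ Set.Ioc 0 T) ∧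
  (∀ x ∈ Set.Ioo (0:ℝ) L, ∀ t ∈ Set.Ioc (0:ℝ) T,
    deriv (fun τ => u x τ) t - ε * iteratedDeriv 2 (fun y => u y t) x + a * u x t
      + b * ∫ τ in (0:ℝ)..t, Real.exp (-β * (t - τ)) * u x τ = f x t) ∧
  (∀ x ∈ Set.Icc (0:ℝ) L, u x 0 = u₀ x) ∧
  (∀ t ∈ Set.Ioc (0:ℝ) T,
    deriv (fun y => u y t) 0 = ψ₁ t ∧ deriv (fun y => u y t) L = ψ₂ t)

open Function Filter Topology

section RectangleIntegrals

variable {f : ℝ → ℝ → ℝ} {a b c d : ℝ}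

theorem ContinuousOn.continuous_comp_projIcc_prod (hab : a ≤ b) (hcd : c ≤ d)
    (hf : ContinuousOn (uncurry f) (Icc a b ×ˢ Icc c d)) :
    Continuous (uncurry fun x t => f (projIcc a b hab x) (projIcc c d hcd t)) :=
  hf.comp_continuous (f := fun p : ℝ × ℝ => ((projIcc a b hab p.1 : ℝ), (projIcc c d hcd p.2 : ℝ)))
    (by fun_prop) fun p => ⟨Subtype.mem _, Subtype.mem _⟩

theorem continuousOn_intervalIntegral_of_continuousOn_prod (hab : a ≤ b) (hcd : c ≤ d)
    (hf : ContinuousOn (uncurry f) (Icc a b ×ˢ Icc c d)) :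
    ContinuousOn (fun x => ∫ t in c..d, f x t) (Icc a b) := by
  -- Mathlib's parametric continuity needs an integrand continuous on the whole plane.
  refine (intervalIntegral.continuous_parametric_intervalIntegral_of_continuous' (μ := volume)
    (hf.continuous_comp_projIcc_prod hab hcd) c d).continuousOn.congr fun x hx => ?_
  refine intervalIntegral.integral_congr fun t ht => ?_
  rw [uIcc_of_le hcd] at ht
  simp only [projIcc_of_mem _ hx, projIcc_of_mem _ ht]

theorem intervalIntegral_integral_swap_of_continuousOn (hab : a ≤ b) (hcd : c ≤ d)
    (hf : ContinuousOn (uncurry f) (Icc a b ×ˢ Icc c d)) :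
    ∫ x in a..b, ∫ t in c..d, f x t = ∫ t in c..d, ∫ x in a..b, f x t := by
  simp_rw [intervalIntegral.integral_of_le hab, intervalIntegral.integral_of_le hcd]
  refine integral_integral_swap ?_
  rw [Measure.prod_restrict, ← Measure.volume_eq_prod]
  exact (hf.integrableOn_compact (isCompact_Icc.prod isCompact_Icc)).mono_set
    (prod_mono Ioc_subset_Icc_self Ioc_subset_Icc_self)

theorem hasDerivAt_intervalIntegral_of_continuousOn_prod {F F' : ℝ → ℝ → ℝ} {t₀ δ : ℝ}
    (hab : a ≤ b) (hδ : 0 < δ) (hF : ContinuousOn (uncurry F) (Icc a b ×ˢ Icc (t₀ - δ) (t₀ + δ)))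
    (hF' : ContinuousOn (uncurry F') (Icc a b ×ˢ Icc (t₀ - δ) (t₀ + δ)))
    (hderiv : ∀ x ∈ Icc a b, ∀ t ∈ Ioo (t₀ - δ) (t₀ + δ), HasDerivAt (F x) (F' x t) t) :
    HasDerivAt (fun t => ∫ x in a..b, F x t) (∫ x in a..b, F' x t₀) t₀ := by
  obtain ⟨C, hC⟩ := (isCompact_Icc.prod isCompact_Icc).exists_bound_of_continuousOn hF'
  have ht₀ : t₀ ∈ Icc (t₀ - δ) (t₀ + δ) := ⟨by linarith, by linarith⟩
  have hmeas : ∀ {G : ℝ → ℝ → ℝ}, ContinuousOn (uncurry G) (Icc a b ×ˢ Icc (t₀ - δ) (t₀ + δ)) →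
      ∀ t ∈ Icc (t₀ - δ) (t₀ + δ), AEStronglyMeasurable (G · t) (volume.restrict (Ioc a b)) :=
    fun hG t ht => ((hG.uncurry_right t ht).mono Ioc_subset_Icc_self).aestronglyMeasurable
      measurableSet_Ioc
  have hU : Ioo (t₀ - δ) (t₀ + δ) ∈ 𝓝 t₀ := Ioo_mem_nhds (by linarith) (by linarith)
  refine (intervalIntegral.hasDerivAt_integral_of_dominated_loc_of_deriv_le
    (F := fun t x => F x t) (F' := fun t x => F' x t) (bound := fun _ => C) hU
    (eventually_of_mem hU fun t ht => ?_) ?_ ?_ ?_ intervalIntegrable_const ?_).2 <;>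
    try rw [uIoc_of_le hab]
  · exact hmeas hF t (Ioo_subset_Icc_self ht)
  · exact (hF.uncurry_right t₀ ht₀).intervalIntegrable_of_Icc hab
  · exact hmeas hF' t₀ ht₀
  · exact ae_of_all _ fun x hx t ht =>
      hC (x, t) ⟨Ioc_subset_Icc_self hx, Ioo_subset_Icc_self ht⟩
  · exact ae_of_all _ fun x hx t ht => hderiv x (Ioc_subset_Icc_self hx) t ht

end RectangleIntegrals

theorem abs_two_mul_mul_intervalIntegral_le {g k : ℝ → ℝ} {a b : ℝ} (c : ℝ) (hab : a ≤ b)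
    (hg : ContinuousOn g (Icc a b)) (hk : ContinuousOn k (Icc a b))
    (hk1 : ∀ τ ∈ Icc a b, |k τ| ≤ 1) :
    |2 * c * ∫ τ in a..b, k τ * g τ| ≤ (b - a) * c ^ 2 + ∫ τ in a..b, g τ ^ 2 := by
  have hpt : ∀ τ ∈ Icc a b, |2 * c * (k τ * g τ)| ≤ c ^ 2 + g τ ^ 2 := fun τ hτ => by
    rw [abs_mul, abs_mul, abs_mul, abs_two]
    have hkg : |k τ| * |g τ| ≤ |g τ| := mul_le_of_le_one_left (abs_nonneg _) (hk1 τ hτ)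
    nlinarith [sq_abs c, sq_abs (g τ), sq_nonneg (|c| - |g τ|), abs_nonneg c]
  calc |2 * c * ∫ τ in a..b, k τ * g τ| = |∫ τ in a..b, 2 * c * (k τ * g τ)| := by
        rw [intervalIntegral.integral_const_mul]
    _ ≤ ∫ τ in a..b, |2 * c * (k τ * g τ)| := intervalIntegral.abs_integral_le_integral_abs hab
    _ ≤ ∫ τ in a..b, (c ^ 2 + g τ ^ 2) :=
        intervalIntegral.integral_mono_on hab
          ((continuousOn_const.mul (hk.mul hg)).abs.intervalIntegrable_of_Icc hab)
          ((continuousOn_const.add (hg.pow 2)).intervalIntegrable_of_Icc hab) hpt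
    _ = (b - a) * c ^ 2 + ∫ τ in a..b, g τ ^ 2 := by
        have hg2 : ContinuousOn (fun τ => g τ ^ 2) (Icc a b) := hg.pow 2
        rw [intervalIntegral.integral_add intervalIntegrable_const
          (hg2.intervalIntegrable_of_Icc hab), intervalIntegral.integral_const, smul_eq_mul]

theorem nonpos_of_hasDerivAt_le_mul {F F' : ℝ → ℝ} {a b c : ℝ} (hF : ContinuousOn F (Icc a b))
    (ha : F a ≤ 0) (hderiv : ∀ t ∈ Ioo a b, HasDerivAt F (F' t) t)
    (hle : ∀ t ∈ Ioo a b, F' t ≤ c * F t) : ∀ t ∈ Icc a b, F t ≤ 0 := by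
  set M : ℝ → ℝ := fun t => exp (-c * t) * F t
  have hM : ∀ t ∈ Ioo a b, HasDerivAt M (exp (-c * t) * (F' t - c * F t)) t := fun t ht => by
    have h := (((hasDerivAt_id t).const_mul (-c)).exp).fun_mul (hderiv t ht)
    exact h.congr_deriv (by simp only [id]; ring)
  have hanti : AntitoneOn M (Icc a b) := by
    refine antitoneOn_of_deriv_nonpos (convex_Icc a b)
      ((continuous_exp.comp (continuous_const.mul continuous_id)).continuousOn.mul hF)
      (fun t ht => ?_) fun t ht => ?_ <;> rw [interior_Icc] at ht
    · exact (hM t ht).differentiableAt.differentiableWithinAt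
    · rw [(hM t ht).deriv]
      exact mul_nonpos_of_nonneg_of_nonpos (exp_pos _).le (sub_nonpos.2 (hle t ht))
  intro t ht
  have hMt : M t ≤ M a := hanti ⟨le_rfl, ht.1.trans ht.2⟩ ht ht.1
  have hMa : M a ≤ 0 := mul_nonpos_of_nonneg_of_nonpos (exp_pos _).le ha
  exact nonpos_of_mul_nonpos_right (hMt.trans hMa) (exp_pos _)

theorem eqOn_zero_of_hasDerivAt_le_add_integral {E E' : ℝ → ℝ} {a b K : ℝ}
    (hE : ContinuousOn E (Icc a b)) (ha : E a = 0) (hnn : ∀ t ∈ Icc a b, 0 ≤ E t)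
    (hderiv : ∀ t ∈ Ioo a b, HasDerivAt E (E' t) t)
    (hle : ∀ t ∈ Ioo a b, E' t ≤ K * (E t + ∫ s in a..t, E s)) : ∀ t ∈ Icc a b, E t = 0 := by
  have hint_nn : ∀ t ∈ Icc a b, 0 ≤ ∫ s in a..t, E s := fun t ht =>
    intervalIntegral.integral_nonneg ht.1 fun s hs => hnn s ⟨hs.1, hs.2.trans ht.2⟩
  have hprim : ∀ t ∈ Ioo a b, HasDerivAt (fun t => ∫ s in a..t, E s) (E t) t := fun t ht =>
    intervalIntegral.integral_hasDerivAt_right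
      ((hE.mono (Icc_subset_Icc_right ht.2.le)).intervalIntegrable_of_Icc ht.1.le)
      ((hE.mono Ioo_subset_Icc_self).stronglyMeasurableAtFilter isOpen_Ioo t ht)
      (hE.continuousAt (Icc_mem_nhds ht.1 ht.2))
  have hprim_cont : ContinuousOn (fun t => ∫ s in a..t, E s) (Icc a b) := by
    by_cases hab : a ≤ b
    · simpa only [uIcc_of_le hab] using
        intervalIntegral.continuousOn_primitive_interval (hE.integrableOn_Icc.mono_set
          (uIcc_of_le hab).subset)
    · simp [Icc_eq_empty hab]
  have hF := nonpos_of_hasDerivAt_le_mul (F := fun t => E t + ∫ s in a..t, E s) (c := K + 1)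
    (hE.add hprim_cont) (by simp [ha]) (fun t ht => (hderiv t ht).add (hprim t ht)) fun t ht => by
      have := hint_nn t (Ioo_subset_Icc_self ht)
      nlinarith [hle t ht]
  intro t ht
  linarith [hF t ht, hnn t ht, hint_nn t ht]

/-- The partial derivatives are explicit arguments: `deriv` of a difference of two solutions agrees
with the difference of their `deriv`s only on `[0, L]`, so at `x = 0, L` its `iteratedDeriv 2`
need not be the difference of theirs. -/
structure IsHomogeneousNeumannSolution (a b ε β L T : ℝ) (w w_t w_x w_xx : ℝ → ℝ → ℝ) : Prop where
  continuousOn : ContinuousOn (uncurry w) (Icc 0 L ×ˢ Icc 0 T)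
  continuousOn_t : ContinuousOn (uncurry w_t) (Icc 0 L ×ˢ Ioc 0 T)
  continuousOn_xx : ∀ t ∈ Ioc 0 T, ContinuousOn (w_xx · t) (Icc 0 L)
  hasDerivAt_t : ∀ x ∈ Icc 0 L, ∀ t ∈ Ioc 0 T, HasDerivAt (w x) (w_t x t) t
  hasDerivAt_x : ∀ x ∈ Icc 0 L, ∀ t ∈ Ioc 0 T, HasDerivAt (w · t) (w_x x t) x
  hasDerivAt_xx : ∀ x ∈ Icc 0 L, ∀ t ∈ Ioc 0 T, HasDerivAt (w_x · t) (w_xx x t) x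
  equation : ∀ x ∈ Ioo 0 L, ∀ t ∈ Ioc 0 T,
    w_t x t - ε * w_xx x t + a * w x t + b * ∫ τ in 0..t, exp (-β * (t - τ)) * w x τ = 0
  initial : ∀ x ∈ Icc 0 L, w x 0 = 0
  boundary_left : ∀ t ∈ Ioc 0 T, w_x 0 t = 0
  boundary_right : ∀ t ∈ Ioc 0 T, w_x L t = 0

theorem IsRegularNeumannSolution.isHomogeneousNeumannSolution_sub {a b ε β L T : ℝ}
    {f : ℝ → ℝ → ℝ} {u₀ ψ₁ ψ₂ : ℝ → ℝ} {u₁ u₂ : ℝ → ℝ → ℝ}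
    (h₁ : IsRegularNeumannSolution a b ε β L T f u₀ ψ₁ ψ₂ u₁)
    (h₂ : IsRegularNeumannSolution a b ε β L T f u₀ ψ₁ ψ₂ u₂) :
    IsHomogeneousNeumannSolution a b ε β L T (fun x t => u₁ x t - u₂ x t)
      (fun x t => deriv (u₁ x ·) t - deriv (u₂ x ·) t)
      (fun x t => deriv (u₁ · t) x - deriv (u₂ · t) x)
      (fun x t => iteratedDeriv 2 (u₁ · t) x - iteratedDeriv 2 (u₂ · t) x) := by
  obtain ⟨c₁, d₁, ct₁, -, cxx₁, eq₁, ic₁, bc₁⟩ := h₁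
  obtain ⟨c₂, d₂, ct₂, -, cxx₂, eq₂, ic₂, bc₂⟩ := h₂
  have iteratedDeriv_two_eq (g : ℝ → ℝ) : iteratedDeriv 2 g = deriv (deriv g) := by
    rw [iteratedDeriv_succ, iteratedDeriv_one]
  refine
    { continuousOn := c₁.sub c₂
      continuousOn_t := ct₁.sub ct₂
      continuousOn_xx := fun t ht => ContinuousOn.uncurry_right (f := fun x t =>
        iteratedDeriv 2 (u₁ · t) x - iteratedDeriv 2 (u₂ · t) x) t ht (cxx₁.sub cxx₂)
      hasDerivAt_t := fun x hx t ht => (d₁ x hx t ht).1.hasDerivAt.sub (d₂ x hx t ht).1.hasDerivAt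
      hasDerivAt_x := fun x hx t ht =>
        (d₁ x hx t ht).2.1.hasDerivAt.sub (d₂ x hx t ht).2.1.hasDerivAt
      hasDerivAt_xx := fun x hx t ht => by
        rw [iteratedDeriv_two_eq, iteratedDeriv_two_eq]
        exact (d₁ x hx t ht).2.2.hasDerivAt.fun_sub (d₂ x hx t ht).2.2.hasDerivAt
      equation := fun x hx t ht => ?_
      initial := fun x hx => by simp only [ic₁ x hx, ic₂ x hx, sub_self]
      boundary_left := fun t ht => by simp only [(bc₁ t ht).1, (bc₂ t ht).1, sub_self]
      boundary_right := fun t ht => by simp only [(bc₁ t ht).2, (bc₂ t ht).2, sub_self] }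
  have hx' : x ∈ Icc 0 L := Ioo_subset_Icc_self hx
  have hsub : uIcc 0 t ⊆ Icc 0 T := by
    rw [uIcc_of_le ht.1.le]
    exact Icc_subset_Icc_right ht.2
  have hint : ∀ {u : ℝ → ℝ → ℝ}, ContinuousOn (uncurry u) (Icc 0 L ×ˢ Icc 0 T) →
      IntervalIntegrable (fun τ => exp (-β * (t - τ)) * u x τ) volume 0 t := fun hu =>
    (Continuous.continuousOn (by fun_prop)).mul ((hu.uncurry_left x hx').mono hsub)
      |>.intervalIntegrable
  have hsplit : ∫ τ in 0..t, exp (-β * (t - τ)) * (u₁ x τ - u₂ x τ) =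
      (∫ τ in 0..t, exp (-β * (t - τ)) * u₁ x τ) - ∫ τ in 0..t, exp (-β * (t - τ)) * u₂ x τ := by
    rw [← intervalIntegral.integral_sub (hint c₁) (hint c₂)]
    simp only [mul_sub]
  rw [hsplit]
  linear_combination eq₁ x hx t ht - eq₂ x hx t ht

noncomputable def energy (L : ℝ) (w : ℝ → ℝ → ℝ) (t : ℝ) : ℝ := ∫ x in 0..L, w x t ^ 2

namespace IsHomogeneousNeumannSolution

variable {a b ε β L T : ℝ} {w w_t w_x w_xx : ℝ → ℝ → ℝ}

theorem continuousOn_w (h : IsHomogeneousNeumannSolution a b ε β L T w w_t w_x w_xx)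
    {t : ℝ} (ht : t ∈ Ioc 0 T) : ContinuousOn (w · t) (Icc 0 L) :=
  fun x hx => (h.hasDerivAt_x x hx t ht).continuousAt.continuousWithinAt

theorem continuousOn_w_x (h : IsHomogeneousNeumannSolution a b ε β L T w w_t w_x w_xx)
    {t : ℝ} (ht : t ∈ Ioc 0 T) : ContinuousOn (w_x · t) (Icc 0 L) :=
  fun x hx => (h.hasDerivAt_xx x hx t ht).continuousAt.continuousWithinAt

theorem integral_w_mul_w_xx (h : IsHomogeneousNeumannSolution a b ε β L T w w_t w_x w_xx)
    {t : ℝ} (hL : 0 ≤ L) (ht : t ∈ Ioc 0 T) :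
    ∫ x in 0..L, w x t * w_xx x t = -∫ x in 0..L, w_x x t ^ 2 := by
  have hibp := intervalIntegral.integral_mul_deriv_eq_deriv_mul_of_hasDerivAt
    (by simpa only [uIcc_of_le hL] using h.continuousOn_w ht)
    (by simpa only [uIcc_of_le hL] using h.continuousOn_w_x ht)
    (fun x hx => h.hasDerivAt_x x (by simpa [hL] using Ioo_subset_Icc_self hx) t ht)
    (fun x hx => h.hasDerivAt_xx x (by simpa [hL] using Ioo_subset_Icc_self hx) t ht)
    ((h.continuousOn_w_x ht).intervalIntegrable_of_Icc hL)
    ((h.continuousOn_xx t ht).intervalIntegrable_of_Icc hL)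
  rw [hibp, h.boundary_left t ht, h.boundary_right t ht]
  simp only [mul_zero, sub_zero, zero_sub, sq]

theorem hasDerivAt_energy (h : IsHomogeneousNeumannSolution a b ε β L T w w_t w_x w_xx)
    {t : ℝ} (hL : 0 ≤ L) (ht : t ∈ Ioo 0 T) :
    HasDerivAt (energy L w) (∫ x in 0..L, 2 * w x t * w_t x t) t := by
  obtain ⟨δ, hδ, hsub⟩ : ∃ δ > 0, Icc (t - δ) (t + δ) ⊆ Ioc 0 T := by
    refine ⟨min t (T - t) / 2, by have := ht.1; have := ht.2; positivity, fun s hs => ?_⟩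
    have := min_le_left t (T - t)
    have := min_le_right t (T - t)
    exact ⟨by linarith [hs.1, ht.1], by linarith [hs.2, ht.2]⟩
  have hrect : Icc 0 L ×ˢ Icc (t - δ) (t + δ) ⊆ Icc 0 L ×ˢ Ioc 0 T := prod_mono subset_rfl hsub
  have hw := h.continuousOn.mono (hrect.trans (prod_mono subset_rfl Ioc_subset_Icc_self))
  refine hasDerivAt_intervalIntegral_of_continuousOn_prod hL hδ
    (F := fun x s => w x s ^ 2) (F' := fun x s => 2 * w x s * w_t x s) (hw.pow 2)
    ((continuousOn_const.mul hw).mul (h.continuousOn_t.mono hrect)) fun x hx s hs => ?_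
  exact ((h.hasDerivAt_t x hx s (hsub (Ioo_subset_Icc_self hs))).pow 2).congr_deriv (by ring)

theorem two_mul_w_mul_w_t_le (h : IsHomogeneousNeumannSolution a b ε β L T w w_t w_x w_xx)
    (ha : 0 ≤ a) (hb : 0 ≤ b) (hβ : 0 ≤ β) {x t : ℝ} (hx : x ∈ Ioo 0 L) (ht : t ∈ Ioc 0 T) :
    2 * w x t * w_t x t ≤
      2 * ε * (w x t * w_xx x t) + b * (t * w x t ^ 2 + ∫ τ in 0..t, w x τ ^ 2) := by
  have hw : ContinuousOn (w x) (Icc 0 t) :=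
    (h.continuousOn.uncurry_left x (Ioo_subset_Icc_self hx)).mono (Icc_subset_Icc_right ht.2)
  have hmemory := abs_two_mul_mul_intervalIntegral_le (w x t) ht.1.le hw
    (k := fun τ => exp (-β * (t - τ))) (Continuous.continuousOn (by fun_prop)) fun τ hτ => by
      rw [abs_exp, exp_le_one_iff]
      nlinarith [hτ.2]
  rw [sub_zero] at hmemory
  set I := ∫ τ in 0..t, exp (-β * (t - τ)) * w x τ
  have hw_t : w_t x t = ε * w_xx x t - a * w x t - b * I := by linarith [h.equation x hx t ht]
  calc 2 * w x t * w_t x t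
      = 2 * ε * (w x t * w_xx x t) - 2 * a * w x t ^ 2 + b * -(2 * w x t * I) := by
        rw [hw_t]; ring
    _ ≤ 2 * ε * (w x t * w_xx x t) + b * |2 * w x t * I| := by
        nlinarith [mul_le_mul_of_nonneg_left (neg_le_abs (2 * w x t * I)) hb,
          mul_nonneg ha (sq_nonneg (w x t))]
    _ ≤ _ := by gcongr

theorem integral_two_mul_w_mul_w_t_le (h : IsHomogeneousNeumannSolution a b ε β L T w w_t w_x w_xx)
    (ha : 0 ≤ a) (hb : 0 ≤ b) (hε : 0 ≤ ε) (hβ : 0 ≤ β) (hL : 0 ≤ L) {t : ℝ}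
    (ht : t ∈ Ioc 0 T) :
    ∫ x in 0..L, 2 * w x t * w_t x t ≤ b * (t * energy L w t + ∫ s in 0..t, energy L w s) := by
  have hw : ContinuousOn (w · t) (Icc 0 L) := h.continuousOn_w ht
  have hrect : ContinuousOn (uncurry fun x τ => w x τ ^ 2) (Icc 0 L ×ˢ Icc 0 t) :=
    (h.continuousOn.mono (prod_mono subset_rfl (Icc_subset_Icc_right ht.2))).pow 2
  have hw_xx : IntervalIntegrable (fun x => w x t * w_xx x t) volume 0 L :=
    (hw.mul (h.continuousOn_xx t ht)).intervalIntegrable_of_Icc hL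
  have hw2 : IntervalIntegrable (fun x => t * w x t ^ 2) volume 0 L :=
    (continuousOn_const.mul (hw.pow 2)).intervalIntegrable_of_Icc hL
  have hJ : IntervalIntegrable (fun x => ∫ τ in 0..t, w x τ ^ 2) volume 0 L :=
    (continuousOn_intervalIntegral_of_continuousOn_prod hL ht.1.le hrect).intervalIntegrable_of_Icc
      hL
  have hsplit : ∫ x in 0..L, (2 * ε * (w x t * w_xx x t) + b * (t * w x t ^ 2 +
      ∫ τ in 0..t, w x τ ^ 2)) = 2 * ε * (∫ x in 0..L, w x t * w_xx x t) +
        b * (t * energy L w t + ∫ s in 0..t, energy L w s) := by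
    unfold energy
    rw [intervalIntegral.integral_add (hw_xx.const_mul _) ((hw2.add hJ).const_mul _),
      intervalIntegral.integral_const_mul, intervalIntegral.integral_const_mul,
      intervalIntegral.integral_add hw2 hJ, intervalIntegral.integral_const_mul,
      intervalIntegral_integral_swap_of_continuousOn hL ht.1.le hrect]
  have hw_x : 0 ≤ ∫ x in 0..L, w_x x t ^ 2 :=
    intervalIntegral.integral_nonneg hL fun _ _ => sq_nonneg _
  calc ∫ x in 0..L, 2 * w x t * w_t x t
      ≤ ∫ x in 0..L, (2 * ε * (w x t * w_xx x t) + b * (t * w x t ^ 2 +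
          ∫ τ in 0..t, w x τ ^ 2)) :=
        intervalIntegral.integral_mono_on_of_le_Ioo hL
          (((continuousOn_const.mul hw).mul
            (h.continuousOn_t.uncurry_right t ht)).intervalIntegrable_of_Icc hL)
          ((hw_xx.const_mul _).add ((hw2.add hJ).const_mul _))
          fun x hx => h.two_mul_w_mul_w_t_le ha hb hβ hx ht
    _ = -(2 * ε * ∫ x in 0..L, w_x x t ^ 2) +
          b * (t * energy L w t + ∫ s in 0..t, energy L w s) := by
        rw [hsplit, h.integral_w_mul_w_xx hL ht]; ring
    _ ≤ b * (t * energy L w t + ∫ s in 0..t, energy L w s) := by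
        nlinarith [mul_nonneg hε hw_x]

theorem continuousOn_energy (h : IsHomogeneousNeumannSolution a b ε β L T w w_t w_x w_xx)
    (hL : 0 ≤ L) (hT : 0 ≤ T) : ContinuousOn (energy L w) (Icc 0 T) :=
  continuousOn_intervalIntegral_of_continuousOn_prod hT hL (f := fun t x => w x t ^ 2)
    ((h.continuousOn.comp continuous_swap.continuousOn fun _ hp => ⟨hp.2, hp.1⟩).pow 2)

theorem energy_eq_zero (h : IsHomogeneousNeumannSolution a b ε β L T w w_t w_x w_xx)
    (ha : 0 ≤ a) (hb : 0 ≤ b) (hε : 0 ≤ ε) (hβ : 0 ≤ β) (hL : 0 ≤ L) :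
    ∀ t ∈ Icc 0 T, energy L w t = 0 := by
  rcases lt_or_ge T 0 with hT | hT
  · simp [Icc_eq_empty_of_lt hT]
  have hnn : ∀ t, 0 ≤ energy L w t := fun t =>
    intervalIntegral.integral_nonneg hL fun _ _ => sq_nonneg _
  refine eqOn_zero_of_hasDerivAt_le_add_integral (K := b * (T + 1)) (h.continuousOn_energy hL hT)
    ?_ (fun t _ => hnn t) (fun t ht => h.hasDerivAt_energy hL ht) fun t ht => ?_
  · refine (intervalIntegral.integral_congr (g := fun _ => 0) fun x hx => ?_).trans (by simp)
    rw [uIcc_of_le hL] at hx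
    simp [h.initial x hx]
  · have hint : 0 ≤ ∫ s in 0..t, energy L w s :=
      intervalIntegral.integral_nonneg ht.1.le fun s _ => hnn s
    refine (h.integral_two_mul_w_mul_w_t_le ha hb hε hβ hL (Ioo_subset_Ioc_self ht)).trans ?_
    nlinarith [mul_le_mul_of_nonneg_left (by linarith [ht.2] : t ≤ T + 1)
      (mul_nonneg hb (hnn t)), mul_nonneg (mul_nonneg hb hT) hint]

theorem eq_zero (h : IsHomogeneousNeumannSolution a b ε β L T w w_t w_x w_xx)
    (ha : 0 ≤ a) (hb : 0 ≤ b) (hε : 0 ≤ ε) (hβ : 0 ≤ β) (hL : 0 < L) :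
    ∀ x ∈ Icc 0 L, ∀ t ∈ Icc 0 T, w x t = 0 := by
  intro x hx t ht
  by_contra hne
  have hpos : 0 < energy L w t :=
    intervalIntegral.integral_pos hL ((h.continuousOn.uncurry_right t ht).pow 2)
      (fun _ _ => sq_nonneg _) ⟨x, hx, by positivity⟩
  exact hpos.ne' (h.energy_eq_zero ha hb hε hβ hL.le t ht)

end IsHomogeneousNeumannSolution

theorem neumann_uniqueness_general (a b ε β L T : ℝ) (ha : 0 < a) (hb : 0 < b) (hε : 0 < ε)
    (hβ : 0 < β) (hL : 0 < L)
    (f : ℝ → ℝ → ℝ)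
    (u₀ : ℝ → ℝ)
    (ψ₁ ψ₂ : ℝ → ℝ)
    (u₁ u₂ : ℝ → ℝ → ℝ)
    (h₁ : IsRegularNeumannSolution a b ε β L T f u₀ ψ₁ ψ₂ u₁)
    (h₂ : IsRegularNeumannSolution a b ε β L T f u₀ ψ₁ ψ₂ u₂) :
    ∀ x ∈ Set.Icc (0:ℝ) L, ∀ t ∈ Set.Icc (0:ℝ) T, u₁ x t = u₂ x t := fun x hx t ht =>
  sub_eq_zero.1 <|
    (h₁.isHomogeneousNeumannSolution_sub h₂).eq_zero ha.le hb.le hε.le hβ.le hL x hx t ht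

/-- uniqueness of regular solutions of the Neumann problem. -/
theorem neumann_uniqueness (a b ε β L T : ℝ) (ha : 0 < a) (hb : 0 < b) (hε : 0 < ε)
    (hβ : 0 < β) (hL : 0 < L) (hT : 0 < T)
    (f : ℝ → ℝ → ℝ)
    (hf : ContinuousOn (fun p : ℝ × ℝ => f p.1 p.2) (Set.Icc 0 L ×ˢ Set.Icc 0 T))
    (u₀ : ℝ → ℝ) (hu₀ : ContinuousOn u₀ (Set.Icc 0 L))
    (ψ₁ ψ₂ : ℝ → ℝ) (hψ₁ : ContinuousOn ψ₁ (Set.Icc 0 T))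
    (hψ₂ : ContinuousOn ψ₂ (Set.Icc 0 T))
    (u₁ u₂ : ℝ → ℝ → ℝ)
    (h₁ : IsRegularNeumannSolution a b ε β L T f u₀ ψ₁ ψ₂ u₁)
    (h₂ : IsRegularNeumannSolution a b ε β L T f u₀ ψ₁ ψ₂ u₂) :
    ∀ x ∈ Set.Icc (0:ℝ) L, ∀ t ∈ Set.Icc (0:ℝ) T, u₁ x t = u₂ x t :=
  neumann_uniqueness_general a b ε β L T ha hb hε hβ hL f u₀ ψ₁ ψ₂ u₁ u₂ h₁ h₂
end

section
/- For all x ∈ ℝ and t > 0, K₁(x,t) = ∫₀^t e^{−β(t−τ)} K₀(x,τ) dτ admits the explicit representation K₁(x,t) = ∫₀^t ( e^{−x²/(4εy) − ay − β(t−y)} / (2√(πεy)) ) · J₀(2√(b y (t−y))) dy, where J₀ is the Bessel function of the first kind of order 0, defined by the power series J₀(z) = Σ_{k=0}^∞ ((−1)^k/(k!)²)(z/2)^{2k}. -/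
open MeasureTheory Real Set

noncomputable def K1 (a b ε β x t : ℝ) : ℝ :=
  ∫ τ in (0:ℝ)..t, Real.exp (-β * (t - τ)) * K0 a b ε β x τ

noncomputable def J0 (z : ℝ) : ℝ :=
  ∑' k : ℕ, ((-1 : ℝ) ^ k / ((Nat.factorial k : ℝ)) ^ 2) * (z / 2) ^ (2 * k)

/-!
Write `J₁(2√v) = √v · F₁(v)` and `J₀(2√v) = F₀(v)` with the entire series `F₀ = J0Series`,
`F₁ = J1Series`; termwise, `∫₀^U F₁ = 1 - F₀(U)`. Collecting all exponential factors into
`w(y) = K1Weight … y`, the memory term of `e^{-β(t-τ)} K₀(x,τ)` becomes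
`∫₀^τ w(y) · b√y · F₁(b y (τ - y)) dy`. The integrand is bounded on the square `(0,t]²`, so the
integrations over the triangle `0 < y < τ < t` may be exchanged, and the inner integral
`∫_y^t F₁(b y (τ - y)) dτ = (1 - F₀(b y (t - y))) / (b y)` cancels the free term `w(τ)/√τ`
up to `w(y) F₀(b y (t - y)) / √y`, which is the `J₀` integrand.
-/

open scoped Nat

section FactorialDominatedSeries

variable {c : ℕ → ℝ}

theorem summable_mul_pow_of_abs_le_inv_factorial (hc : ∀ k, |c k| ≤ (k ! : ℝ)⁻¹) (u : ℝ) :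
    Summable fun k => c k * u ^ k := by
  refine .of_norm_bounded (Real.summable_pow_div_factorial |u|) fun k => ?_
  rw [Real.norm_eq_abs, abs_mul, abs_pow, div_eq_inv_mul]
  exact mul_le_mul_of_nonneg_right (hc k) (by positivity)

theorem abs_tsum_mul_pow_le_exp (hc : ∀ k, |c k| ≤ (k ! : ℝ)⁻¹) (u : ℝ) :
    |∑' k, c k * u ^ k| ≤ exp |u| := by
  rw [Real.exp_eq_exp_ℝ, NormedSpace.exp_eq_tsum_div, ← Real.norm_eq_abs]
  refine tsum_of_norm_bounded (Real.summable_pow_div_factorial |u|).hasSum fun k => ?_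
  rw [Real.norm_eq_abs, abs_mul, abs_pow, div_eq_inv_mul]
  exact mul_le_mul_of_nonneg_right (hc k) (by positivity)

theorem measurable_tsum_mul_pow (hc : ∀ k, |c k| ≤ (k ! : ℝ)⁻¹) :
    Measurable fun u => ∑' k, c k * u ^ k := by
  refine measurable_of_tendsto_metrizable (f := fun n u => ∑ k ∈ Finset.range n, c k * u ^ k)
    (fun n => by fun_prop) (tendsto_pi_nhds.2 fun u => ?_)
  exact (summable_mul_pow_of_abs_le_inv_factorial hc u).hasSum.tendsto_sum_nat

theorem hasSum_intervalIntegral_tsum_mul_pow (hc : ∀ k, |c k| ≤ (k ! : ℝ)⁻¹) (U : ℝ) :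
    HasSum (fun k => c k * (U ^ (k + 1) / (k + 1))) (∫ u in 0..U, ∑' k, c k * u ^ k) := by
  have hterm (k : ℕ) : ∫ u in 0..U, c k * u ^ k = c k * (U ^ (k + 1) / (k + 1)) := by
    simp [integral_pow]
  simp_rw [← hterm]
  refine intervalIntegral.hasSum_integral_of_dominated_convergence (fun k _ => |c k| * |U| ^ k)
    (fun k => by fun_prop) (fun k => .of_forall fun u hu => ?_)
    (.of_forall fun _ _ => ?_) intervalIntegrable_const
    (.of_forall fun u _ => (summable_mul_pow_of_abs_le_inv_factorial hc u).hasSum)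
  · rw [Real.norm_eq_abs, abs_mul, abs_pow]
    have hu_le : |u| ≤ |U| := by
      rcases le_total 0 U with h | h
      · rw [uIoc_of_le h] at hu; rw [abs_of_pos hu.1, abs_of_nonneg h]; exact hu.2
      · rw [uIoc_of_ge h] at hu; rw [abs_of_nonpos hu.2, abs_of_nonpos h]; linarith [hu.1]
    gcongr
  · simpa [abs_mul, abs_pow] using
      (summable_mul_pow_of_abs_le_inv_factorial hc |U|).abs

end FactorialDominatedSeries

noncomputable def j0Coeff (k : ℕ) : ℝ := (-1) ^ k / (k ! : ℝ) ^ 2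

noncomputable def j1Coeff (k : ℕ) : ℝ := (-1) ^ k / ((k ! : ℝ) * (k + 1)!)

noncomputable def J0Series (u : ℝ) : ℝ := ∑' k, j0Coeff k * u ^ k

noncomputable def J1Series (u : ℝ) : ℝ := ∑' k, j1Coeff k * u ^ k

theorem abs_j0Coeff_le (k : ℕ) : |j0Coeff k| ≤ (k ! : ℝ)⁻¹ := by
  have h1 : (1 : ℝ) ≤ k ! := mod_cast k.factorial_pos
  rw [j0Coeff, abs_div, abs_pow, abs_neg, abs_one, one_pow, abs_of_pos (by positivity), sq,
    one_div]
  exact inv_anti₀ (by positivity) (le_mul_of_one_le_left (by positivity) h1)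

theorem abs_j1Coeff_le (k : ℕ) : |j1Coeff k| ≤ (k ! : ℝ)⁻¹ := by
  have h1 : (1 : ℝ) ≤ (k + 1)! := mod_cast (k + 1).factorial_pos
  rw [j1Coeff, abs_div, abs_pow, abs_neg, abs_one, one_pow, abs_of_pos (by positivity), one_div]
  exact inv_anti₀ (by positivity) (le_mul_of_one_le_right (by positivity) h1)

@[fun_prop]
theorem measurable_J0Series : Measurable J0Series :=
  measurable_tsum_mul_pow abs_j0Coeff_le

@[fun_prop]
theorem measurable_J1Series : Measurable J1Series :=
  measurable_tsum_mul_pow abs_j1Coeff_le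

theorem j1Coeff_div_succ (k : ℕ) : j1Coeff k / (k + 1) = -j0Coeff (k + 1) := by
  rw [j1Coeff, j0Coeff, Nat.factorial_succ, Nat.cast_mul]
  push_cast
  field_simp
  ring

theorem J0_two_mul_sqrt {v : ℝ} (hv : 0 ≤ v) : J0 (2 * √v) = J0Series v := by
  have h : 2 * √v / 2 = √v := by ring
  simp only [J0, J0Series, j0Coeff, h, pow_mul, sq_sqrt hv]

theorem J1_two_mul_sqrt {v : ℝ} (hv : 0 ≤ v) : J1 (2 * √v) = √v * J1Series v := by
  have h : 2 * √v / 2 = √v := by ring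
  simp only [J1, J1Series, j1Coeff, ← tsum_mul_left, h, pow_succ, pow_mul, sq_sqrt hv]
  exact tsum_congr fun k => by ring

theorem integral_J1Series (U : ℝ) : ∫ u in 0..U, J1Series u = 1 - J0Series U := by
  have hJ0 : HasSum (fun k => j0Coeff (k + 1) * U ^ (k + 1)) (J0Series U - 1) := by
    have := (summable_mul_pow_of_abs_le_inv_factorial abs_j0Coeff_le U).hasSum
    rw [← hasSum_nat_add_iff' 1] at this
    simpa [J0Series, j0Coeff] using this
  have hterm : (fun k : ℕ => j1Coeff k * (U ^ (k + 1) / (k + 1)))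
      = fun k => -(j0Coeff (k + 1) * U ^ (k + 1)) := by
    funext k
    rw [← neg_mul, ← j1Coeff_div_succ]
    ring
  refine (hasSum_intervalIntegral_tsum_mul_pow abs_j1Coeff_le U).unique ?_
  rw [hterm, ← neg_sub]
  exact hJ0.neg

theorem integral_J1Series_mul_sub {c : ℝ} (hc : c ≠ 0) (y t : ℝ) :
    ∫ τ in y..t, J1Series (c * (τ - y)) = (1 - J0Series (c * (t - y))) / c := by
  rw [intervalIntegral.integral_comp_sub_right (fun s => J1Series (c * s)),
    intervalIntegral.integral_comp_mul_left (fun s => J1Series s) hc, sub_self, mul_zero,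
    integral_J1Series, smul_eq_mul, inv_mul_eq_div]

section Triangle

variable {f : ℝ → ℝ → ℝ} {t : ℝ}

theorem integrable_uncurry_indicator_Iic
    (hf : IntegrableOn (Function.uncurry f) (Ioc 0 t ×ˢ Ioc 0 t)) :
    Integrable (Function.uncurry fun τ y => (Iic τ).indicator (f τ) y)
      ((volume.restrict (Ioc 0 t)).prod (volume.restrict (Ioc 0 t))) := by
  rw [Measure.prod_restrict, ← Measure.volume_eq_prod]
  exact Integrable.indicator (s := {p : ℝ × ℝ | p.2 ≤ p.1}) hf
    (measurableSet_le measurable_snd measurable_fst)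

theorem setIntegral_Ioc_indicator_Iic {τ : ℝ} (hτ : τ ∈ Ioc 0 t) :
    ∫ y in Ioc 0 t, (Iic τ).indicator (f τ) y = ∫ y in 0..τ, f τ y := by
  rw [setIntegral_indicator measurableSet_Iic, Ioc_inter_Iic, min_eq_right hτ.2,
    intervalIntegral.integral_of_le hτ.1.le]

theorem intervalIntegrable_intervalIntegral_of_integrableOn_prod (ht : 0 ≤ t)
    (hf : IntegrableOn (Function.uncurry f) (Ioc 0 t ×ˢ Ioc 0 t)) :
    IntervalIntegrable (fun τ => ∫ y in 0..τ, f τ y) volume 0 t := by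
  rw [intervalIntegrable_iff_integrableOn_Ioc_of_le ht]
  exact (integrable_uncurry_indicator_Iic hf).integral_prod_left.congr
    ((ae_restrict_iff' measurableSet_Ioc).2 (.of_forall fun τ hτ =>
      setIntegral_Ioc_indicator_Iic hτ))

theorem intervalIntegral_triangle_swap (ht : 0 ≤ t)
    (hf : IntegrableOn (Function.uncurry f) (Ioc 0 t ×ˢ Ioc 0 t)) :
    ∫ τ in 0..t, ∫ y in 0..τ, f τ y = ∫ y in 0..t, ∫ τ in y..t, f τ y := by
  calc ∫ τ in 0..t, ∫ y in 0..τ, f τ y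
      = ∫ τ in Ioc 0 t, ∫ y in Ioc 0 t, (Iic τ).indicator (f τ) y := by
        rw [intervalIntegral.integral_of_le ht]
        exact setIntegral_congr_fun measurableSet_Ioc fun τ hτ =>
          (setIntegral_Ioc_indicator_Iic hτ).symm
    _ = ∫ y in Ioc 0 t, ∫ τ in Ioc 0 t, (Iic τ).indicator (f τ) y :=
        integral_integral_swap (integrable_uncurry_indicator_Iic hf)
    _ = ∫ y in 0..t, ∫ τ in y..t, f τ y := by
        rw [intervalIntegral.integral_of_le ht]
        refine setIntegral_congr_fun measurableSet_Ioc fun y hy => ?_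
        have hind : (fun τ => (Iic τ).indicator (f τ) y) = (Ici y).indicator (f · y) := by
          funext τ
          simp only [indicator, mem_Iic, mem_Ici]
        have hIcc : Ioc 0 t ∩ Ici y = Icc y t := by
          ext τ
          simp only [mem_inter_iff, mem_Ioc, mem_Ici, mem_Icc]
          exact ⟨fun h => ⟨h.2, h.1.2⟩, fun h => ⟨⟨hy.1.trans_le h.1, h.2⟩, h.1⟩⟩
        rw [hind, setIntegral_indicator measurableSet_Ici, hIcc, integral_Icc_eq_integral_Ioc,
          intervalIntegral.integral_of_le hy.2]

end Triangle

noncomputable def K1Weight (a ε β x t y : ℝ) : ℝ :=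
  exp (-(x ^ 2 / (4 * ε * y)) - a * y - β * (t - y))

section Kernel

variable {a b ε β x t : ℝ}

theorem K1Weight_pos (y : ℝ) : 0 < K1Weight a ε β x t y :=
  exp_pos _

theorem K1Weight_le_one (ha : 0 ≤ a) (hε : 0 ≤ ε) (hβ : 0 ≤ β) {y : ℝ} (hy : 0 ≤ y)
    (hyt : y ≤ t) : K1Weight a ε β x t y ≤ 1 := by
  have : 0 ≤ x ^ 2 / (4 * ε * y) := by positivity
  rw [K1Weight, exp_le_one_iff]
  nlinarith [mul_nonneg ha hy, mul_nonneg hβ (sub_nonneg.2 hyt)]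

@[fun_prop]
theorem measurable_K1Weight : Measurable (K1Weight a ε β x t) := by
  unfold K1Weight
  fun_prop

theorem integrableOn_K1Weight_div_sqrt (ha : 0 ≤ a) (hε : 0 ≤ ε) (hβ : 0 ≤ β) :
    IntegrableOn (fun y => K1Weight a ε β x t y / √y) (Ioc 0 t) := by
  have hrpow : IntegrableOn (fun y : ℝ => y ^ (-(1 : ℝ) / 2)) (Ioc 0 t) :=
    (intervalIntegrable_iff.1 (intervalIntegral.intervalIntegrable_rpow' (by norm_num))).mono_set
      Ioc_subset_uIoc
  have hbdd : ∀ᵐ y ∂(volume.restrict (Ioc 0 t)), ‖K1Weight a ε β x t y‖ ≤ 1 :=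
    (ae_restrict_iff' measurableSet_Ioc).2 (.of_forall fun y hy => by
      rw [Real.norm_eq_abs, abs_of_pos (K1Weight_pos ..)]
      exact K1Weight_le_one ha hε hβ hy.1.le hy.2)
  refine (hrpow.bdd_mul measurable_K1Weight.aestronglyMeasurable hbdd).congr
    ((ae_restrict_iff' measurableSet_Ioc).2 (.of_forall fun y hy => ?_))
  beta_reduce
  rw [sqrt_eq_rpow, neg_div, rpow_neg hy.1.le, div_eq_mul_inv _ (y ^ _)]

theorem sqrt_div_sqrt_mul_J1 (hb : 0 ≤ b) {y s : ℝ} (hy : 0 ≤ y) (hs : 0 < s) :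
    √b / √s * J1 (2 * √(b * y * s)) = b * √y * J1Series (b * y * s) := by
  have hs' : √s ≠ 0 := (sqrt_pos.2 hs).ne'
  rw [J1_two_mul_sqrt (by positivity), sqrt_mul (by positivity), sqrt_mul hb]
  field_simp
  rw [sq_sqrt hb]
  ring

theorem exp_mul_K0 (hb : 0 ≤ b) {τ : ℝ} (hτ : 0 < τ) :
    exp (-β * (t - τ)) * K0 a b ε β x τ
      = 1 / (2 * √(π * ε)) * (K1Weight a ε β x t τ / √τ
        - ∫ y in 0..τ, K1Weight a ε β x t y * (b * √y * J1Series (b * y * (τ - y)))) := by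
  have hweight (y : ℝ) : K1Weight a ε β x t y
      = exp (-β * (t - τ)) * exp (-(x ^ 2 / (4 * ε * y)) - a * y - β * (τ - y)) := by
    rw [K1Weight, ← exp_add]
    ring_nf
  have hinner : exp (-β * (t - τ)) * (√b * ∫ y in 0..τ,
      exp (-(x ^ 2 / (4 * ε * y)) - a * y - β * (τ - y)) / √(τ - y) * J1 (2 * √(b * y * (τ - y))))
      = ∫ y in 0..τ, K1Weight a ε β x t y * (b * √y * J1Series (b * y * (τ - y))) := by
    rw [← intervalIntegral.integral_const_mul, ← intervalIntegral.integral_const_mul]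
    refine intervalIntegral.integral_congr_ae ?_
    filter_upwards [Measure.ae_ne volume τ] with y hyτ hy
    rw [uIoc_of_le hτ.le] at hy
    have hs : 0 < τ - y := sub_pos.2 (lt_of_le_of_ne hy.2 hyτ)
    rw [← sqrt_div_sqrt_mul_J1 hb hy.1.le hs, hweight]
    ring
  have houter : exp (-β * (t - τ)) * (exp (-(x ^ 2 / (4 * ε * τ)) - a * τ) / √τ)
      = K1Weight a ε β x t τ / √τ := by
    rw [hweight]
    ring_nf
  rw [K0, ← hinner, ← houter]
  ring

theorem abs_mul_mul_sub_le (hb : 0 ≤ b) {y τ : ℝ} (hy : y ∈ Ioc 0 t) (hτ : τ ∈ Ioc 0 t) :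
    |b * y * (τ - y)| ≤ b * t * t := by
  have hdiff : |τ - y| ≤ t :=
    abs_sub_le_iff.2 ⟨by linarith [hy.1, hτ.2], by linarith [hy.2, hτ.1]⟩
  have hbt : 0 ≤ b * t := mul_nonneg hb (hy.1.le.trans hy.2)
  rw [abs_mul, abs_mul, abs_of_nonneg hb, abs_of_pos hy.1]
  gcongr
  exact hy.2

theorem integrableOn_K1Weight_mul_J1Series (ha : 0 ≤ a) (hb : 0 ≤ b) (hε : 0 ≤ ε) (hβ : 0 ≤ β) :
    IntegrableOn (Function.uncurry fun τ y =>
        K1Weight a ε β x t y * (b * √y * J1Series (b * y * (τ - y)))) (Ioc 0 t ×ˢ Ioc 0 t) := by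
  refine Measure.integrableOn_of_bounded (M := b * √t * exp (b * t * t))
    ((Metric.isBounded_Ioc 0 t).prod (Metric.isBounded_Ioc 0 t)).measure_lt_top.ne
    (by unfold Function.uncurry; fun_prop)
    ((ae_restrict_iff' (measurableSet_Ioc.prod measurableSet_Ioc)).2 (.of_forall fun p hp => ?_))
  have hJ : |J1Series (b * p.2 * (p.1 - p.2))| ≤ exp (b * t * t) :=
    (abs_tsum_mul_pow_le_exp abs_j1Coeff_le _).trans
      (exp_le_exp.2 (abs_mul_mul_sub_le hb hp.2 hp.1))
  have hW : |K1Weight a ε β x t p.2| ≤ 1 := by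
    rw [abs_of_pos (K1Weight_pos ..)]
    exact K1Weight_le_one ha hε hβ hp.2.1.le hp.2.2
  simp only [Function.uncurry, Real.norm_eq_abs, abs_mul, abs_of_nonneg hb,
    abs_of_nonneg (sqrt_nonneg _)]
  calc |K1Weight a ε β x t p.2| * (b * √p.2 * |J1Series (b * p.2 * (p.1 - p.2))|)
      ≤ 1 * (b * √t * exp (b * t * t)) := by gcongr; exact hp.2.2
    _ = b * √t * exp (b * t * t) := one_mul _

theorem integrableOn_K1Weight_mul_J0Series_div_sqrt (ha : 0 ≤ a) (hb : 0 ≤ b) (hε : 0 ≤ ε)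
    (hβ : 0 ≤ β) :
    IntegrableOn (fun y => K1Weight a ε β x t y * J0Series (b * y * (t - y)) / √y) (Ioc 0 t) := by
  have hbdd :
      ∀ᵐ y ∂(volume.restrict (Ioc 0 t)), ‖J0Series (b * y * (t - y))‖ ≤ exp (b * t * t) :=
    (ae_restrict_iff' measurableSet_Ioc).2 (.of_forall fun y hy =>
      (abs_tsum_mul_pow_le_exp abs_j0Coeff_le _).trans
        (exp_le_exp.2 (abs_mul_mul_sub_le hb hy ⟨hy.1.trans_le hy.2, le_rfl⟩)))
  have hmeas : Measurable fun y => J0Series (b * y * (t - y)) := by fun_prop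
  refine ((integrableOn_K1Weight_div_sqrt (x := x) ha hε hβ).mul_bdd
    hmeas.aestronglyMeasurable hbdd).congr (.of_forall fun y => ?_)
  ring

theorem integral_K1Weight_mul_J1Series (hb : 0 < b) {y : ℝ} (hy : 0 < y) :
    ∫ τ in y..t, K1Weight a ε β x t y * (b * √y * J1Series (b * y * (τ - y)))
      = K1Weight a ε β x t y * (1 - J0Series (b * y * (t - y))) / √y := by
  have hy' : √y ≠ 0 := (sqrt_pos.2 hy).ne'
  rw [intervalIntegral.integral_const_mul, intervalIntegral.integral_const_mul,
    integral_J1Series_mul_sub (mul_pos hb hy).ne']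
  field_simp
  rw [sq_sqrt hy.le]

theorem exp_div_mul_J0_eq (hb : 0 ≤ b) (hε : 0 ≤ ε) {y : ℝ} (hy : 0 ≤ y) (hyt : y ≤ t) :
    exp (-(x ^ 2 / (4 * ε * y)) - a * y - β * (t - y)) / (2 * √(π * ε * y))
        * J0 (2 * √(b * y * (t - y)))
      = 1 / (2 * √(π * ε)) * (K1Weight a ε β x t y * J0Series (b * y * (t - y)) / √y) := by
  rw [J0_two_mul_sqrt (mul_nonneg (mul_nonneg hb hy) (sub_nonneg.2 hyt)),
    sqrt_mul (mul_nonneg pi_pos.le hε) y, K1Weight]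
  ring

end Kernel

/-- explicit representation of `K₁` via the Bessel function `J₀`. -/
theorem K1_explicit (a b ε β : ℝ) (ha : 0 < a) (hb : 0 < b) (hε : 0 < ε) (hβ : 0 < β)
    (x t : ℝ) (ht : 0 < t) :
    K1 a b ε β x t =
      ∫ y in (0:ℝ)..t,
        Real.exp (-(x ^ 2 / (4 * ε * y)) - a * y - β * (t - y))
            / (2 * Real.sqrt (π * ε * y))
          * J0 (2 * Real.sqrt (b * y * (t - y))) := by
  set W := K1Weight a ε β x t
  have hIoc : ∀ᵐ y ∂volume, y ∈ uIoc 0 t → y ∈ Ioc 0 t :=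
    .of_forall fun y hy => by rwa [uIoc_of_le ht.le] at hy
  have hW := (intervalIntegrable_iff_integrableOn_Ioc_of_le ht.le).2
    (integrableOn_K1Weight_div_sqrt (x := x) (t := t) ha.le hε.le hβ.le)
  have hWJ := (intervalIntegrable_iff_integrableOn_Ioc_of_le ht.le).2
    (integrableOn_K1Weight_mul_J0Series_div_sqrt (x := x) ha.le hb.le hε.le hβ.le)
  have hG := integrableOn_K1Weight_mul_J1Series (x := x) (t := t) ha.le hb.le hε.le hβ.le
  calc K1 a b ε β x t
      = ∫ τ in 0..t, 1 / (2 * √(π * ε)) *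
          (W τ / √τ - ∫ y in 0..τ, W y * (b * √y * J1Series (b * y * (τ - y)))) :=
        intervalIntegral.integral_congr_ae (hIoc.mono fun τ hτ hτ' => exp_mul_K0 hb.le (hτ hτ').1)
    _ = 1 / (2 * √(π * ε)) * ((∫ y in 0..t, W y / √y)
          - ∫ y in 0..t, ∫ τ in y..t, W y * (b * √y * J1Series (b * y * (τ - y)))) := by
        rw [intervalIntegral.integral_const_mul, intervalIntegral.integral_sub hW
          (intervalIntegrable_intervalIntegral_of_integrableOn_prod ht.le hG),
          intervalIntegral_triangle_swap ht.le hG]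
    _ = 1 / (2 * √(π * ε)) * ((∫ y in 0..t, W y / √y)
          - ∫ y in 0..t, (W y / √y - W y * J0Series (b * y * (t - y)) / √y)) := by
        congr 2
        refine intervalIntegral.integral_congr_ae (hIoc.mono fun y hy hy' => ?_)
        rw [integral_K1Weight_mul_J1Series hb (hy hy').1]
        ring
    _ = ∫ y in 0..t, 1 / (2 * √(π * ε)) * (W y * J0Series (b * y * (t - y)) / √y) := by
        rw [intervalIntegral.integral_sub hW hWJ, intervalIntegral.integral_const_mul]
        ring
    _ = _ := intervalIntegral.integral_congr_ae (hIoc.mono fun y hy hy' =>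
        (exp_div_mul_J0_eq hb.le hε.le (hy hy').1.le (hy hy').2).symm)
end
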